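/- arXiv:1203.1132 — 7 statements merged into one kernel-verified Lean document; each statement's English description precedes it below -/
import Mathlib

section
/- For every n ≥ 1, 0 < 1 − α(n+1) < (γ(n)/4)·(1 − α(n)). -/
/-- One step of the recursion for the ice-model boundary counts
`(pa, pb, pc, pd)` on the Sierpinski gasket `SG(n)`. -/
def iceStep : ℕ × ℕ × ℕ × ℕ → ℕ × ℕ × ℕ × ℕ
  | (a, b, c, d) =>
    ((a + b) ^ 2 * (a + 3 * c + d),
     (a + b) ^ 2 * (b + 3 * c + d),
     a ^ 2 * b + b ^ 2 * a + (3 * c + d) ^ 3,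
     a ^ 3 + b ^ 3 + (3 * c + d) ^ 3)

/-- The quadruple `(pa(n), pb(n), pc(n), pd(n))`. -/
def iceSeq : ℕ → ℕ × ℕ × ℕ × ℕ
  | 0 => (0, 1, 0, 1)
  | n + 1 => iceStep (iceSeq n)

def pa (n : ℕ) : ℕ := (iceSeq n).1
def pb (n : ℕ) : ℕ := (iceSeq n).2.1
def pc (n : ℕ) : ℕ := (iceSeq n).2.2.1
def pd (n : ℕ) : ℕ := (iceSeq n).2.2.2

noncomputable def alphaSeq (n : ℕ) : ℝ := (pa n : ℝ) / (pb n : ℝ)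
noncomputable def betaSeq (n : ℕ) : ℝ := (pd n : ℝ) / (pc n : ℝ)
noncomputable def gammaSeq (n : ℕ) : ℝ := (pb n : ℝ) / (pc n : ℝ)

/-!
Both sides are explicit in the level-`n` counts: the common factor `(pa + pb)²` cancels in
`α(n+1)`, so `1 - α(n+1) = (pb - pa) / (pb + 3 pc + pd)`, while `γ(n)/4 · (1 - α(n)) =
(pb - pa) / (4 pc)`. The theorem therefore reduces to `pa < pb` and `0 < pc < pb + pd`.
The first propagates along the recursion because `pa(n+1)` and `pb(n+1)` share the factor
`(pa + pb)²`; the second holds from level 1 on because `pc(n+1)` is dominated termwise by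
`pb(n+1) + pd(n+1)`.
-/

lemma pa_succ (n : ℕ) : pa (n + 1) = (pa n + pb n) ^ 2 * (pa n + 3 * pc n + pd n) := rfl
lemma pb_succ (n : ℕ) : pb (n + 1) = (pa n + pb n) ^ 2 * (pb n + 3 * pc n + pd n) := rfl
lemma pc_succ (n : ℕ) :
    pc (n + 1) = pa n ^ 2 * pb n + pb n ^ 2 * pa n + (3 * pc n + pd n) ^ 3 := rfl
lemma pd_succ (n : ℕ) : pd (n + 1) = pa n ^ 3 + pb n ^ 3 + (3 * pc n + pd n) ^ 3 := rfl

-- `pc 0 = 0`, so positivity of `3 * pc + pd` is the form of `pc > 0` that survives level 0.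
lemma pa_lt_pb_and_three_mul_pc_add_pd_pos (n : ℕ) : pa n < pb n ∧ 0 < 3 * pc n + pd n := by
  induction n with
  | zero => decide
  | succ n ih =>
    obtain ⟨hab, hcd⟩ := ih
    refine ⟨?_, ?_⟩
    · rw [pa_succ, pb_succ]
      exact Nat.mul_lt_mul_of_pos_left (by omega) (pow_pos (by omega) 2)
    · have : 0 < (3 * pc n + pd n) ^ 3 := pow_pos hcd 3
      rw [pd_succ]
      omega

lemma pa_lt_pb (n : ℕ) : pa n < pb n := (pa_lt_pb_and_three_mul_pc_add_pd_pos n).1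

lemma pc_pos {n : ℕ} (hn : 1 ≤ n) : 0 < pc n := by
  obtain ⟨n, rfl⟩ := Nat.exists_eq_add_of_le' hn
  have : 0 < (3 * pc n + pd n) ^ 3 := pow_pos (pa_lt_pb_and_three_mul_pc_add_pd_pos n).2 3
  rw [pc_succ]
  omega

lemma pc_lt_pb_add_pd {n : ℕ} (hn : 1 ≤ n) : pc n < pb n + pd n := by
  obtain ⟨n, rfl⟩ := Nat.exists_eq_add_of_le' hn
  obtain ⟨hab, hcd⟩ := pa_lt_pb_and_three_mul_pc_add_pd_pos n
  rw [pb_succ, pc_succ, pd_succ]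
  nlinarith [Nat.mul_pos (Nat.mul_pos hcd hcd) (pow_pos (Nat.zero_lt_of_lt hab) 2)]

lemma one_sub_alphaSeq_succ (n : ℕ) :
    1 - alphaSeq (n + 1) = (pb n - pa n) / (pb n + 3 * pc n + pd n) := by
  have hb : (0 : ℝ) < pb n := by exact_mod_cast Nat.zero_lt_of_lt (pa_lt_pb n)
  have hsum : (0 : ℝ) < pa n + pb n := by positivity
  rw [alphaSeq, pa_succ, pb_succ]
  push_cast
  field_simp
  ring

lemma gammaSeq_div_four_mul_one_sub_alphaSeq (n : ℕ) :
    gammaSeq n / 4 * (1 - alphaSeq n) = (pb n - pa n) / (4 * pc n) := by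
  have hb : (pb n : ℝ) ≠ 0 := by exact_mod_cast (Nat.zero_lt_of_lt (pa_lt_pb n)).ne'
  rw [gammaSeq, alphaSeq]
  field_simp

theorem stmt_2 (n : ℕ) (hn : 1 ≤ n) :
    0 < 1 - alphaSeq (n + 1) ∧
    1 - alphaSeq (n + 1) < gammaSeq n / 4 * (1 - alphaSeq n) := by
  have hab : (pa n : ℝ) < pb n := by exact_mod_cast pa_lt_pb n
  have hc : (0 : ℝ) < pc n := by exact_mod_cast pc_pos hn
  have hcbd : (pc n : ℝ) < pb n + pd n := by exact_mod_cast pc_lt_pb_add_pd hn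
  rw [one_sub_alphaSeq_succ, gammaSeq_div_four_mul_one_sub_alphaSeq]
  exact ⟨div_pos (by linarith) (by positivity),
    div_lt_div_of_pos_left (by linarith) (by positivity) (by linarith)⟩
end

section
/- For every n ≥ 1, α(n)·γ(n)^3·(1 − α(n))^2 / (32·β(n)^3 + γ(n)^3) < β(n+1) − 1 < γ(n)^3·(1 − α(n))^2 / 32. -/
/-!
Write `(a, b, c, d)` for `(pa n, pb n, pc n, pd n)`. The recursion preserves `a < b` and `c < d`,
since `pb (n+1) - pa (n+1) = (a + b)² (b - a)` and `pd (n+1) - pc (n+1) = (a + b) (b - a)²`.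
In these terms `β(n+1) - 1 = (a + b)(b - a)² / (ab(a + b) + (3c + d)³)`, while the two bounds
are `a (b - a)² / (32 d³ + b³)` and `b (b - a)² / (32 c³)`. Both comparisons then follow from
`a < b` and `(4c)³ < (3c + d)³ < (4d)³`.
-/

section RatioBounds

variable {a b c d : ℝ}

lemma cube_step_ratio_sub_one (e : ℝ) (h : a ^ 2 * b + b ^ 2 * a + e ≠ 0) :
    (a ^ 3 + b ^ 3 + e) / (a ^ 2 * b + b ^ 2 * a + e) - 1 =
      (a + b) * (b - a) ^ 2 / (a ^ 2 * b + b ^ 2 * a + e) := by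
  rw [div_sub_one h]
  ring_nf

lemma mul_cube_step_lt (ha : 0 ≤ a) (hab : a < b) (hc : 0 ≤ c) (hcd : c < d) :
    a * (a ^ 2 * b + b ^ 2 * a + (3 * c + d) ^ 3) < (a + b) * (32 * d ^ 3 + b ^ 3) := by
  have hb : 0 < b := ha.trans_lt hab
  have hcube : (3 * c + d) ^ 3 ≤ (4 * d) ^ 3 :=
    pow_le_pow_left₀ (by linarith) (by linarith) 3
  have hsq : a ^ 2 < b ^ 2 := pow_lt_pow_left₀ hab ha two_ne_zero
  have hd3 : 0 ≤ d ^ 3 := pow_nonneg (by linarith) 3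
  nlinarith [mul_lt_mul_of_pos_right hsq (mul_pos hb (by linarith : 0 < a + b)),
    mul_le_mul_of_nonneg_left hcube ha, mul_le_mul_of_nonneg_right hab.le hd3]

lemma lt_mul_cube_step (ha : 0 ≤ a) (hab : a < b) (hc : 0 ≤ c) (hcd : c < d) :
    32 * c ^ 3 * (a + b) < b * (a ^ 2 * b + b ^ 2 * a + (3 * c + d) ^ 3) := by
  have hb : 0 < b := ha.trans_lt hab
  have hcube : (4 * c) ^ 3 < (3 * c + d) ^ 3 :=
    pow_lt_pow_left₀ (by linarith) (by linarith) three_ne_zero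
  have hc3 : 0 ≤ c ^ 3 := pow_nonneg hc 3
  nlinarith [mul_lt_mul_of_pos_left hcube hb, mul_le_mul_of_nonneg_left hab.le hc3,
    mul_nonneg (mul_nonneg (sq_nonneg a) hb.le) hb.le, mul_nonneg (sq_nonneg b) ha]

theorem cube_step_ratio_bounds (ha : 0 ≤ a) (hab : a < b) (hc : 0 < c) (hcd : c < d) :
    a / b * (b / c) ^ 3 * (1 - a / b) ^ 2 / (32 * (d / c) ^ 3 + (b / c) ^ 3) <
        (a ^ 3 + b ^ 3 + (3 * c + d) ^ 3) / (a ^ 2 * b + b ^ 2 * a + (3 * c + d) ^ 3) - 1 ∧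
      (a ^ 3 + b ^ 3 + (3 * c + d) ^ 3) / (a ^ 2 * b + b ^ 2 * a + (3 * c + d) ^ 3) - 1 <
        (b / c) ^ 3 * (1 - a / b) ^ 2 / 32 := by
  have hb : 0 < b := ha.trans_lt hab
  have hd : 0 < d := hc.trans hcd
  have hC : 0 < a ^ 2 * b + b ^ 2 * a + (3 * c + d) ^ 3 := by positivity
  have hgap : 0 < (b - a) ^ 2 := pow_pos (sub_pos.mpr hab) 2
  have hlower : a / b * (b / c) ^ 3 * (1 - a / b) ^ 2 / (32 * (d / c) ^ 3 + (b / c) ^ 3) =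
      a * (b - a) ^ 2 / (32 * d ^ 3 + b ^ 3) := by
    field_simp
  have hupper : (b / c) ^ 3 * (1 - a / b) ^ 2 / 32 = b * (b - a) ^ 2 / (32 * c ^ 3) := by
    field_simp
  rw [cube_step_ratio_sub_one _ hC.ne', hlower, hupper]
  constructor
  · rw [div_lt_div_iff₀ (by positivity) hC]
    nlinarith [mul_lt_mul_of_pos_left (mul_cube_step_lt ha hab hc.le hcd) hgap]
  · rw [div_lt_div_iff₀ hC (by positivity)]
    nlinarith [mul_lt_mul_of_pos_left (lt_mul_cube_step ha hab hc.le hcd) hgap]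

end RatioBounds

lemma pd_pos (n : ℕ) : 0 < pd n := by
  induction n with
  | zero => decide
  | succ n ih => rw [pd_succ]; positivity

lemma pc_lt_pd (n : ℕ) : pc n < pd n := by
  cases n with
  | zero => decide
  | succ n =>
    rw [pc_succ, pd_succ]
    zify
    have hab : (pa n : ℤ) < pb n := by exact_mod_cast pa_lt_pb n
    have hgap : 0 < ((pa n : ℤ) + pb n) * (pb n - pa n) ^ 2 := by
      have : (0 : ℤ) ≤ pa n := by positivity
      exact mul_pos (by linarith) (pow_pos (by linarith) 2)
    linear_combination hgap

theorem stmt_3 (n : ℕ) (hn : 1 ≤ n) :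
    alphaSeq n * gammaSeq n ^ 3 * (1 - alphaSeq n) ^ 2 /
        (32 * betaSeq n ^ 3 + gammaSeq n ^ 3) < betaSeq (n + 1) - 1 ∧
    betaSeq (n + 1) - 1 < gammaSeq n ^ 3 * (1 - alphaSeq n) ^ 2 / 32 := by
  have hβ : betaSeq (n + 1) =
      ((pa n : ℝ) ^ 3 + pb n ^ 3 + (3 * pc n + pd n) ^ 3) /
        (pa n ^ 2 * pb n + pb n ^ 2 * pa n + (3 * pc n + pd n) ^ 3) := by
    simp only [betaSeq, pc_succ, pd_succ]
    push_cast
    rfl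
  rw [hβ]
  exact cube_step_ratio_bounds (Nat.cast_nonneg _) (by exact_mod_cast pa_lt_pb n)
    (by exact_mod_cast pc_pos hn) (by exact_mod_cast pc_lt_pd n)
end

section
/- The sequence (α(n))_{n ≥ 1} is strictly increasing and converges to 1 as n → ∞. -/
lemma pb_pos (n : ℕ) : 0 < pb n := by
  induction n with
  | zero => exact Nat.one_pos
  | succ n ih =>
    rw [pb_succ]
    have h1 : 0 < (pa n + pb n) ^ 2 := by positivity
    have h2 : 0 < pb n + 3 * pc n + pd n := by omega
    exact Nat.mul_pos h1 h2

lemma poly_key (t s : ℤ) (ht : 0 ≤ t) (hs : 0 ≤ s) :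
    2 * s * t ^ 2 ≤ t ^ 3 + 4 * s ^ 3 := by
  nlinarith [mul_nonneg hs (sq_nonneg (t - 2 * s)),
    mul_nonneg ht (sq_nonneg (2 * t - 3 * s)),
    mul_nonneg (mul_nonneg hs hs) ht]

lemma pb_le_s (n : ℕ) (hn : 1 ≤ n) : pb n ≤ 3 * pc n + pd n := by
  induction n with
  | zero => omega
  | succ n ih =>
    rcases Nat.eq_or_lt_of_le hn with h | h
    · -- n + 1 = 1, i.e. n = 0
      have h0 : n = 0 := by omega
      subst h0
      decide
    · have hn' : 1 ≤ n := by omega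
      have hb := ih hn'
      -- 3 c(n+1) + d(n+1) = (a+b)^3 + 4 s^3
      have hid : 3 * pc (n + 1) + pd (n + 1)
          = (pa n + pb n) ^ 3 + 4 * (3 * pc n + pd n) ^ 3 := by
        rw [pc_succ, pd_succ]; ring
      rw [pb_succ, hid]
      set t := pa n + pb n with ht
      set s := 3 * pc n + pd n with hs
      have h1 : t ^ 2 * (pb n + 3 * pc n + pd n) ≤ t ^ 2 * (2 * s) :=
        Nat.mul_le_mul_left _ (by omega)
      have h2 : t ^ 2 * (2 * s) ≤ t ^ 3 + 4 * s ^ 3 := by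
        have := poly_key (t : ℤ) (s : ℤ) (by positivity) (by positivity)
        zify
        linarith
      exact le_trans h1 h2

lemma alpha_succ (n : ℕ) :
    alphaSeq (n + 1)
      = ((pa n : ℝ) + 3 * pc n + pd n) / ((pb n : ℝ) + 3 * pc n + pd n) := by
  have hb := pb_pos n
  have ht : ((pa n : ℝ) + pb n) ^ 2 ≠ 0 := by
    have : (0 : ℝ) < (pb n : ℝ) := by exact_mod_cast hb
    positivity
  unfold alphaSeq
  rw [pa_succ, pb_succ]
  push_cast
  rw [mul_div_mul_left _ _ ht]

lemma alpha_lt_one (n : ℕ) : alphaSeq n ≤ 1 := by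
  unfold alphaSeq
  have hb : (0 : ℝ) < (pb n : ℝ) := by exact_mod_cast pb_pos n
  rw [div_le_one hb]
  exact_mod_cast (pa_lt_pb n).le

lemma alpha_halve (n : ℕ) (hn : 1 ≤ n) :
    1 - alphaSeq (n + 1) ≤ (1 - alphaSeq n) / 2 := by
  have hb : (0 : ℝ) < (pb n : ℝ) := by exact_mod_cast pb_pos n
  have hd : (0 : ℝ) < (pd n : ℝ) := by exact_mod_cast pd_pos n
  have hc : (0 : ℝ) ≤ (pc n : ℝ) := by positivity
  have hab : (pa n : ℝ) < (pb n : ℝ) := by exact_mod_cast pa_lt_pb n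
  have hbs : (pb n : ℝ) ≤ 3 * pc n + pd n := by
    have := pb_le_s n hn
    push_cast
    exact_mod_cast this
  set A := (pa n : ℝ)
  set B := (pb n : ℝ)
  set S := (3 * (pc n : ℝ) + (pd n : ℝ)) with hS
  have hS0 : 0 < S := by positivity
  have hBS : 0 < B + S := by linarith
  have hBS' : (pb n : ℝ) + 3 * pc n + pd n ≠ 0 := by
    push_cast; intro h; nlinarith
  have h1 : 1 - alphaSeq (n + 1) = (B - A) / (B + S) := by
    rw [alpha_succ, one_sub_div hBS']
    rw [hS]
    ring
  have h2 : (1 - alphaSeq n) / 2 = (B - A) / (2 * B) := by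
    unfold alphaSeq
    rw [one_sub_div hb.ne']
    ring
  rw [h1, h2]
  apply div_le_div_of_nonneg_left (by linarith) (by linarith) (by linarith)

lemma alpha_bound (n : ℕ) (hn : 1 ≤ n) : 1 - alphaSeq n ≤ (1 / 2 : ℝ) ^ n := by
  induction n, hn using Nat.le_induction with
  | base =>
    have h1 : alphaSeq 1 = 1 / 2 := by
      unfold alphaSeq
      norm_num [pa, pb, iceSeq, iceStep]
    rw [h1]; norm_num
  | succ n hn ih =>
    have := alpha_halve n hn
    have h2 : ((1 : ℝ) / 2) ^ (n + 1) = (1 / 2 : ℝ) ^ n / 2 := by ring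
    rw [h2]
    linarith

theorem stmt_5 :
    (∀ n : ℕ, 1 ≤ n → alphaSeq n < alphaSeq (n + 1)) ∧
    Filter.Tendsto alphaSeq Filter.atTop (nhds 1) := by
  constructor
  · intro n _
    have hb : (0 : ℝ) < (pb n : ℝ) := by exact_mod_cast pb_pos n
    have hd : (0 : ℝ) < (pd n : ℝ) := by exact_mod_cast pd_pos n
    have hc : (0 : ℝ) ≤ (pc n : ℝ) := by positivity
    have hab : (pa n : ℝ) < (pb n : ℝ) := by exact_mod_cast pa_lt_pb n
    rw [alpha_succ]
    unfold alphaSeq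
    rw [div_lt_div_iff₀ hb (by linarith)]
    nlinarith
  · have hlo : Filter.Tendsto (fun n : ℕ => 1 - (1 / 2 : ℝ) ^ n)
        Filter.atTop (nhds 1) := by
      have h0 : Filter.Tendsto (fun n : ℕ => (1 / 2 : ℝ) ^ n)
          Filter.atTop (nhds 0) := by
        apply tendsto_pow_atTop_nhds_zero_of_lt_one <;> norm_num
      have := Filter.Tendsto.sub (tendsto_const_nhds (x := (1 : ℝ))) h0
      simpa using this
    apply tendsto_of_tendsto_of_tendsto_of_le_of_le' hlo
      (tendsto_const_nhds (x := (1 : ℝ)))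
    · filter_upwards [Filter.eventually_ge_atTop 1] with n hn
      have := alpha_bound n hn
      linarith
    · filter_upwards with n
      exact alpha_lt_one n
end

section
/- For every n ≥ 1, 64·pc(n)^3 < pc(n+1) and pd(n+1) < 64·pd(n)^3. -/
/-- The inductive invariant, valid for `n ≥ 2`. -/
def IceInv (a b c d : ℕ) : Prop :=
  a < b ∧ b ≤ c ∧ c < d ∧ 3 * (a + b) ≤ 3 * c + d ∧
  2 * (a + b) ^ 5 * (b + (3 * c + d)) ^ 3 ≤ 63 * (b - a) ^ 2 * (3 * c + d) ^ 6 ∧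
  2 * b ^ 3 ≤ 63 * (d - c) * d ^ 2

/-- Core inequality: the key invariant `K` propagates through one step. -/
lemma Kstep {S T b Δ : ℕ} (hS : 3 * S ≤ T) (hb : 3 * b ≤ T)
    (hK : 2 * S ^ 5 * (b + T) ^ 3 ≤ 63 * Δ ^ 2 * T ^ 6) :
    2 * (S ^ 2 * (S + 2 * T)) ^ 5 * (S ^ 2 * (b + T) + (S ^ 3 + 4 * T ^ 3)) ^ 3
      ≤ 63 * (S ^ 2 * Δ) ^ 2 * (S ^ 3 + 4 * T ^ 3) ^ 6 := by
  have hT2 : 9 * S ^ 2 ≤ T ^ 2 := by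
    calc 9 * S ^ 2 = (3 * S) ^ 2 := by ring
    _ ≤ T ^ 2 := Nat.pow_le_pow_left hS 2
  have hS3 : 27 * S ^ 3 ≤ T ^ 3 := by
    calc 27 * S ^ 3 = (3 * S) ^ 3 := by ring
    _ ≤ T ^ 3 := Nat.pow_le_pow_left hS 3
  have hbT : (9 * S ^ 2) * (3 * (b + T)) ≤ T ^ 2 * (4 * T) :=
    Nat.mul_le_mul hT2 (by omega)
  have h1 : 27 * (S ^ 2 * (b + T) + (S ^ 3 + 4 * T ^ 3)) ≤ 113 * T ^ 3 := by nlinarith [hbT, hS3]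
  have h2 : 3 * (S ^ 2 * (S + 2 * T)) ≤ 7 * (S ^ 2 * T) := by
    calc 3 * (S ^ 2 * (S + 2 * T)) = S ^ 2 * (3 * (S + 2 * T)) := by ring
    _ ≤ S ^ 2 * (7 * T) := Nat.mul_le_mul_left _ (by omega)
    _ = 7 * (S ^ 2 * T) := by ring
  have P1 : 243 * (S ^ 2 * (S + 2 * T)) ^ 5 ≤ 16807 * (S ^ 2 * T) ^ 5 := by
    calc 243 * (S ^ 2 * (S + 2 * T)) ^ 5 = (3 * (S ^ 2 * (S + 2 * T))) ^ 5 := by ring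
    _ ≤ (7 * (S ^ 2 * T)) ^ 5 := Nat.pow_le_pow_left h2 5
    _ = 16807 * (S ^ 2 * T) ^ 5 := by ring
  have P2 : 19683 * (S ^ 2 * (b + T) + (S ^ 3 + 4 * T ^ 3)) ^ 3 ≤ 1442897 * (T ^ 3) ^ 3 := by
    calc 19683 * (S ^ 2 * (b + T) + (S ^ 3 + 4 * T ^ 3)) ^ 3
        = (27 * (S ^ 2 * (b + T) + (S ^ 3 + 4 * T ^ 3))) ^ 3 := by ring
    _ ≤ (113 * T ^ 3) ^ 3 := Nat.pow_le_pow_left h1 3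
    _ = 1442897 * (T ^ 3) ^ 3 := by ring
  have M : (243 * (S ^ 2 * (S + 2 * T)) ^ 5) * (19683 * (S ^ 2 * (b + T) + (S ^ 3 + 4 * T ^ 3)) ^ 3)
      ≤ (16807 * (S ^ 2 * T) ^ 5) * (1442897 * (T ^ 3) ^ 3) := Nat.mul_le_mul P1 P2
  -- so 4782969 * LHScore ≤ 24250769879 * S^10 * T^14
  have hKT : 2 * S ^ 5 * T ^ 3 ≤ 63 * Δ ^ 2 * T ^ 6 := by
    refine le_trans ?_ hK
    have : T ^ 3 ≤ (b + T) ^ 3 := Nat.pow_le_pow_left (by omega) 3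
    calc 2 * S ^ 5 * T ^ 3 = (2 * S ^ 5) * T ^ 3 := by ring
    _ ≤ (2 * S ^ 5) * (b + T) ^ 3 := Nat.mul_le_mul_left _ this
    _ = 2 * S ^ 5 * (b + T) ^ 3 := by ring
  have hT6 : (4 * T ^ 3) ^ 6 ≤ (S ^ 3 + 4 * T ^ 3) ^ 6 := Nat.pow_le_pow_left (by omega) 6
  -- step3 : 8192 * S^9 * T^15 ≤ RHS
  have s3 : 8192 * (S ^ 9 * T ^ 15) ≤ 63 * (S ^ 2 * Δ) ^ 2 * (S ^ 3 + 4 * T ^ 3) ^ 6 := by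
    calc 8192 * (S ^ 9 * T ^ 15) = (4096 * S ^ 4 * T ^ 12) * (2 * S ^ 5 * T ^ 3) := by ring
    _ ≤ (4096 * S ^ 4 * T ^ 12) * (63 * Δ ^ 2 * T ^ 6) := Nat.mul_le_mul_left _ hKT
    _ = (63 * (S ^ 2 * Δ) ^ 2) * (4 * T ^ 3) ^ 6 := by ring
    _ ≤ (63 * (S ^ 2 * Δ) ^ 2) * (S ^ 3 + 4 * T ^ 3) ^ 6 := Nat.mul_le_mul_left _ hT6
    _ = 63 * (S ^ 2 * Δ) ^ 2 * (S ^ 3 + 4 * T ^ 3) ^ 6 := by ring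
  -- step2 : 3 * S^10 * T^14 ≤ S^9 * T^15
  have s2 : 3 * (S ^ 10 * T ^ 14) ≤ S ^ 9 * T ^ 15 := by
    calc 3 * (S ^ 10 * T ^ 14) = (S ^ 9 * T ^ 14) * (3 * S) := by ring
    _ ≤ (S ^ 9 * T ^ 14) * T := Nat.mul_le_mul_left _ hS
    _ = S ^ 9 * T ^ 15 := by ring
  set A := 2 * (S ^ 2 * (S + 2 * T)) ^ 5 * (S ^ 2 * (b + T) + (S ^ 3 + 4 * T ^ 3)) ^ 3 with hA
  set B := 63 * (S ^ 2 * Δ) ^ 2 * (S ^ 3 + 4 * T ^ 3) ^ 6 with hB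
  have m1 : 4782969 * A ≤ 48501539758 * (S ^ 10 * T ^ 14) := by
    calc 4782969 * A
        = 2 * ((243 * (S ^ 2 * (S + 2 * T)) ^ 5) *
            (19683 * (S ^ 2 * (b + T) + (S ^ 3 + 4 * T ^ 3)) ^ 3)) := by rw [hA]; ring
    _ ≤ 2 * ((16807 * (S ^ 2 * T) ^ 5) * (1442897 * (T ^ 3) ^ 3)) := Nat.mul_le_mul_left _ M
    _ = 48501539758 * (S ^ 10 * T ^ 14) := by ring
  have m2 : 14348907 * A ≤ 48501539758 * (S ^ 9 * T ^ 15) := by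
    calc 14348907 * A = 3 * (4782969 * A) := by ring
    _ ≤ 3 * (48501539758 * (S ^ 10 * T ^ 14)) := Nat.mul_le_mul_left _ m1
    _ = 48501539758 * (3 * (S ^ 10 * T ^ 14)) := by ring
    _ ≤ 48501539758 * (S ^ 9 * T ^ 15) := Nat.mul_le_mul_left _ s2
  have m3 : 117546246144 * A ≤ 48501539758 * B := by
    calc 117546246144 * A = 14348907 * A * 8192 := by ring
    _ ≤ 48501539758 * (S ^ 9 * T ^ 15) * 8192 := Nat.mul_le_mul_right _ m2
    _ = 48501539758 * (8192 * (S ^ 9 * T ^ 15)) := by ring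
    _ ≤ 48501539758 * B := Nat.mul_le_mul_left _ s3
  have m4 : 117546246144 * A ≤ 117546246144 * B :=
    le_trans m3 (Nat.mul_le_mul_right _ (by norm_num))
  exact Nat.le_of_mul_le_mul_left m4 (by norm_num)

/-- The invariant propagates through one iteration step. -/
lemma inv_step {a b c d : ℕ} (h : IceInv a b c d) :
    IceInv ((a + b) ^ 2 * (a + 3 * c + d)) ((a + b) ^ 2 * (b + 3 * c + d))
        (a ^ 2 * b + b ^ 2 * a + (3 * c + d) ^ 3) (a ^ 3 + b ^ 3 + (3 * c + d) ^ 3) := by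
  obtain ⟨h1, h2, h3, h4, h5, h6⟩ := h
  obtain ⟨e, he, he1⟩ : ∃ e, b = a + e ∧ 1 ≤ e := ⟨b - a, by omega, by omega⟩
  have hba : b - a = e := by omega
  rw [hba] at h5
  have hb0 : 0 < a + b := by omega
  have hS3 : 3 * (a + b) ≤ 3 * c + d := h4
  have hb3 : 3 * b ≤ 3 * c + d := by omega
  have hT2 : 9 * (a + b) ^ 2 ≤ (3 * c + d) ^ 2 := by
    calc 9 * (a + b) ^ 2 = (3 * (a + b)) ^ 2 := by ring
    _ ≤ (3 * c + d) ^ 2 := Nat.pow_le_pow_left hS3 2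
  -- key sub-quantities of the new state
  have hsubba : (a + b) ^ 2 * (b + 3 * c + d) - (a + b) ^ 2 * (a + 3 * c + d) = (a + b) ^ 2 * e := by
    have : (a + b) ^ 2 * (b + 3 * c + d) = (a + b) ^ 2 * (a + 3 * c + d) + (a + b) ^ 2 * e := by
      rw [he]; ring
    rw [this]; exact Nat.add_sub_cancel_left _ _
  have hsubdc : (a ^ 3 + b ^ 3 + (3 * c + d) ^ 3) - (a ^ 2 * b + b ^ 2 * a + (3 * c + d) ^ 3)
      = (a + b) * e ^ 2 := by
    have : a ^ 3 + b ^ 3 + (3 * c + d) ^ 3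
        = (a ^ 2 * b + b ^ 2 * a + (3 * c + d) ^ 3) + (a + b) * e ^ 2 := by
      rw [he]; ring
    rw [this]; exact Nat.add_sub_cancel_left _ _
  have k1 : 27 * ((a + b) ^ 2 * (b + 3 * c + d)) ≤ 4 * (3 * c + d) ^ 3 := by
    calc 27 * ((a + b) ^ 2 * (b + 3 * c + d))
        = (9 * (a + b) ^ 2) * (3 * (b + (3 * c + d))) := by ring
    _ ≤ (3 * c + d) ^ 2 * (4 * (3 * c + d)) := Nat.mul_le_mul hT2 (by omega)
    _ = 4 * (3 * c + d) ^ 3 := by ring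
  refine ⟨?_, ?_, ?_, ?_, ?_, ?_⟩
  · -- a' < b'
    exact Nat.mul_lt_mul_of_pos_left (by omega) (pow_pos hb0 2)
  · -- b' ≤ c'
    have k2 : 27 * ((a + b) ^ 2 * (b + 3 * c + d))
        ≤ 27 * (a ^ 2 * b + b ^ 2 * a + (3 * c + d) ^ 3) := by
      calc 27 * ((a + b) ^ 2 * (b + 3 * c + d)) ≤ 4 * (3 * c + d) ^ 3 := k1
      _ ≤ 27 * (3 * c + d) ^ 3 := Nat.mul_le_mul_right _ (by norm_num)
      _ ≤ 27 * (a ^ 2 * b + b ^ 2 * a + (3 * c + d) ^ 3) :=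
          Nat.mul_le_mul_left _ (Nat.le_add_left _ _)
    exact Nat.le_of_mul_le_mul_left k2 (by norm_num)
  · -- c' < d'
    have : a ^ 2 * b + b ^ 2 * a < a ^ 3 + b ^ 3 := by rw [he]; nlinarith [he1]
    omega
  · -- 3 S' ≤ T'
    have e1 : 27 * ((a + b) ^ 2 * (a + 3 * c + d) + (a + b) ^ 2 * (b + 3 * c + d))
        ≤ 7 * (3 * c + d) ^ 3 := by
      calc 27 * ((a + b) ^ 2 * (a + 3 * c + d) + (a + b) ^ 2 * (b + 3 * c + d))
          = (9 * (a + b) ^ 2) * (3 * ((a + b) + 2 * (3 * c + d))) := by ring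
      _ ≤ (3 * c + d) ^ 2 * (7 * (3 * c + d)) := Nat.mul_le_mul hT2 (by omega)
      _ = 7 * (3 * c + d) ^ 3 := by ring
    have e2 : 7 * (3 * c + d) ^ 3 ≤ 9 * (3 * (a ^ 2 * b + b ^ 2 * a + (3 * c + d) ^ 3)
        + (a ^ 3 + b ^ 3 + (3 * c + d) ^ 3)) := by
      have : (3 * c + d) ^ 3 ≤ 3 * (a ^ 2 * b + b ^ 2 * a + (3 * c + d) ^ 3)
          + (a ^ 3 + b ^ 3 + (3 * c + d) ^ 3) := by
        have := Nat.le_add_left ((3 * c + d) ^ 3) (a ^ 3 + b ^ 3)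
        omega
      calc 7 * (3 * c + d) ^ 3 ≤ 9 * (3 * c + d) ^ 3 := Nat.mul_le_mul_right _ (by norm_num)
      _ ≤ 9 * (3 * (a ^ 2 * b + b ^ 2 * a + (3 * c + d) ^ 3)
          + (a ^ 3 + b ^ 3 + (3 * c + d) ^ 3)) := Nat.mul_le_mul_left _ this
    have e3 : 9 * (3 * ((a + b) ^ 2 * (a + 3 * c + d) + (a + b) ^ 2 * (b + 3 * c + d)))
        ≤ 9 * (3 * (a ^ 2 * b + b ^ 2 * a + (3 * c + d) ^ 3)
            + (a ^ 3 + b ^ 3 + (3 * c + d) ^ 3)) := by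
      calc 9 * (3 * ((a + b) ^ 2 * (a + 3 * c + d) + (a + b) ^ 2 * (b + 3 * c + d)))
          = 27 * ((a + b) ^ 2 * (a + 3 * c + d) + (a + b) ^ 2 * (b + 3 * c + d)) := by ring
      _ ≤ 7 * (3 * c + d) ^ 3 := e1
      _ ≤ _ := e2
    exact Nat.le_of_mul_le_mul_left e3 (by norm_num)
  · -- K'
    rw [hsubba]
    have q1 : (a + b) ^ 2 * (a + 3 * c + d) + (a + b) ^ 2 * (b + 3 * c + d)
        = (a + b) ^ 2 * ((a + b) + 2 * (3 * c + d)) := by ring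
    have q2 : 3 * (a ^ 2 * b + b ^ 2 * a + (3 * c + d) ^ 3) + (a ^ 3 + b ^ 3 + (3 * c + d) ^ 3)
        = (a + b) ^ 3 + 4 * (3 * c + d) ^ 3 := by ring
    have q3 : (a + b) ^ 2 * (b + 3 * c + d) = (a + b) ^ 2 * (b + (3 * c + d)) := by ring
    rw [q1, q2, q3]
    exact Kstep (S := a + b) (T := 3 * c + d) (b := b) (Δ := e) hS3 hb3 h5
  · -- J'
    rw [hsubdc]
    calc 2 * ((a + b) ^ 2 * (b + 3 * c + d)) ^ 3
        = (a + b) * (2 * (a + b) ^ 5 * (b + (3 * c + d)) ^ 3) := by ring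
    _ ≤ (a + b) * (63 * e ^ 2 * (3 * c + d) ^ 6) := Nat.mul_le_mul_left _ h5
    _ = 63 * ((a + b) * e ^ 2) * ((3 * c + d) ^ 3) ^ 2 := by ring
    _ ≤ 63 * ((a + b) * e ^ 2) * (a ^ 3 + b ^ 3 + (3 * c + d) ^ 3) ^ 2 :=
        Nat.mul_le_mul_left _ (Nat.pow_le_pow_left (Nat.le_add_left _ _) 2)

lemma inv_n : ∀ n, 2 ≤ n → IceInv (pa n) (pb n) (pc n) (pd n) := by
  intro n hn
  induction n with
  | zero => omega
  | succ m ih =>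
    rcases Nat.lt_or_ge m 2 with hm | hm
    · interval_cases m
      · omega
      · show IceInv (pa 2) (pb 2) (pc 2) (pd 2)
        have e1 : pa 2 = 54 := rfl
        have e2 : pb 2 = 63 := rfl
        have e3 : pc 2 = 131 := rfl
        have e4 : pd 2 = 134 := rfl
        rw [e1, e2, e3, e4]
        constructor; · norm_num
        constructor; · norm_num
        constructor; · norm_num
        constructor; · norm_num
        constructor; · norm_num
        · norm_num
    · have h := ih hm
      rw [pa_succ, pb_succ, pc_succ, pd_succ]
      exact inv_step h

lemma goal_of_inv {a b c d : ℕ} (h : IceInv a b c d) :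
    64 * c ^ 3 < a ^ 2 * b + b ^ 2 * a + (3 * c + d) ^ 3 ∧
    a ^ 3 + b ^ 3 + (3 * c + d) ^ 3 < 64 * d ^ 3 := by
  obtain ⟨h1, h2, h3, h4, h5, h6⟩ := h
  constructor
  · have hc : (4 * c + 1) ^ 3 ≤ (3 * c + d) ^ 3 := Nat.pow_le_pow_left (by omega) 3
    nlinarith [hc]
  · obtain ⟨δ, hδ, hδ1⟩ : ∃ δ, d = c + δ ∧ 1 ≤ δ := ⟨d - c, by omega, by omega⟩
    have hdc : d - c = δ := by omega
    rw [hdc] at h6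
    have hab : a ^ 3 < b ^ 3 := Nat.pow_lt_pow_left h1 (by norm_num)
    have key : (3 * c + d) ^ 3 + 63 * δ * d ^ 2 ≤ 64 * d ^ 3 := by
      rw [hδ]; nlinarith [hδ1, sq_nonneg c, sq_nonneg δ]
    calc a ^ 3 + b ^ 3 + (3 * c + d) ^ 3 < 2 * b ^ 3 + (3 * c + d) ^ 3 := by omega
    _ ≤ 63 * δ * d ^ 2 + (3 * c + d) ^ 3 := by omega
    _ ≤ 64 * d ^ 3 := by omega

theorem stmt_8 (n : ℕ) (hn : 1 ≤ n) :
    64 * pc n ^ 3 < pc (n + 1) ∧ pd (n + 1) < 64 * pd n ^ 3 := by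
  rcases Nat.lt_or_ge n 2 with h | h
  · interval_cases n
    constructor
    · show 64 * pc 1 ^ 3 < pc 2
      norm_num [show pc 1 = 1 from rfl, show pc 2 = 131 from rfl]
    · show pd 2 < 64 * pd 1 ^ 3
      norm_num [show pd 1 = 2 from rfl, show pd 2 = 134 from rfl]
  · have h' := goal_of_inv (inv_n n h)
    rw [pc_succ, pd_succ]
    exact h'
end

section
/- For all integers n > m ≥ 1, 64^{(3^{n−m}−1)/2}·pc(m)^{3^{n−m}} < pc(n) < 64^{(3^{n−m}−1)/2}·pc(m)^{3^{n−m}}·( γ(m)^3/32 + (1 + (β(m)−1)/4)^3 )^{(3^{n−m}−1)/2}, where the left- and right-hand sides with the real ratios β(m), γ(m) are compared with pc(n) as real numbers. -/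
/-! ### Cast recursion lemmas -/

lemma paR_succ (n : ℕ) : (pa (n+1) : ℝ) = ((pa n : ℝ) + pb n)^2 * ((pa n : ℝ) + 3*pc n + pd n) := by
  rw [show pa (n+1) = (pa n + pb n)^2 * (pa n + 3*pc n + pd n) from rfl]; push_cast; ring

lemma pbR_succ (n : ℕ) : (pb (n+1) : ℝ) = ((pa n : ℝ) + pb n)^2 * ((pb n : ℝ) + 3*pc n + pd n) := by
  rw [show pb (n+1) = (pa n + pb n)^2 * (pb n + 3*pc n + pd n) from rfl]; push_cast; ring

lemma pcR_succ (n : ℕ) : (pc (n+1) : ℝ) = (pa n : ℝ)^2 * pb n + (pb n : ℝ)^2 * pa n + (3*(pc n : ℝ) + pd n)^3 := by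
  rw [show pc (n+1) = pa n^2 * pb n + pb n^2 * pa n + (3*pc n + pd n)^3 from rfl]; push_cast; ring

lemma pdR_succ (n : ℕ) : (pd (n+1) : ℝ) = (pa n : ℝ)^3 + (pb n : ℝ)^3 + (3*(pc n : ℝ) + pd n)^3 := by
  rw [show pd (n+1) = pa n^3 + pb n^3 + (3*pc n + pd n)^3 from rfl]; push_cast; ring

/-! ### Generic one-step real lemmas -/

section StepLemmas
variable {a b c d : ℝ}

lemma step_a1 (h1 : 1 ≤ a) (h2 : a < b) (h3 : c ≤ d) (h4 : b ≤ 2*c) :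
    1 ≤ (a+b)^2*(a+3*c+d) := by nlinarith [sq_nonneg (a+b)]

lemma step_ab (h1 : 1 ≤ a) (h2 : a < b) (h3 : c ≤ d) (h4 : b ≤ 2*c) :
    (a+b)^2*(a+3*c+d) < (a+b)^2*(b+3*c+d) := by
  have hab : (0:ℝ) < a + b := by linarith
  have h : (0:ℝ) < (a+b)^2 := by positivity
  nlinarith [h]

lemma step_cd (h1 : 1 ≤ a) (h2 : a < b) :
    a^2*b+b^2*a+(3*c+d)^3 ≤ a^3+b^3+(3*c+d)^3 := by
  nlinarith [mul_nonneg (by nlinarith : (0:ℝ) ≤ a+b) (sq_nonneg (a-b))]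

lemma step_b2c (h1 : 1 ≤ a) (h2 : a < b) (h3 : c ≤ d) (h4 : b ≤ 2*c) (h5 : d ≤ 2*c) :
    (a+b)^2*(b+3*c+d) ≤ 2*(a^2*b+b^2*a+(3*c+d)^3) := by
  have hc : (0:ℝ) < c := by linarith
  have h64 : (4*c)^3 ≤ (3*c+d)^3 := pow_le_pow_left₀ (by linarith) (by linarith) 3
  have h1' : (a+b)^2*(b+3*c+d) ≤ (4*c)^2*(7*c) := by
    apply mul_le_mul (pow_le_pow_left₀ (by linarith) (by linarith) 2) (by linarith) (by linarith) (by positivity)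
  nlinarith [mul_nonneg (sq_nonneg a) (by linarith : (0:ℝ) ≤ b), mul_nonneg (sq_nonneg b) (by linarith : (0:ℝ) ≤ a)]

lemma step_d2c (h1 : 1 ≤ a) (h2 : a < b) (h3 : c ≤ d) (h4 : b ≤ 2*c) (h5 : d ≤ 2*c) :
    a^3+b^3+(3*c+d)^3 ≤ 2*(a^2*b+b^2*a+(3*c+d)^3) := by
  nlinarith [mul_nonneg (mul_nonneg (by linarith : (0:ℝ) ≤ a) (by linarith : (0:ℝ) ≤ a)) (by linarith : (0:ℝ) ≤ b-a),
    pow_le_pow_left₀ (by linarith : (0:ℝ) ≤ b) (by linarith : b ≤ 3*c+d) 3]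

lemma step_lower (h1 : 1 ≤ a) (h2 : a < b) (h3 : c ≤ d) (h4 : b ≤ 2*c) :
    64*c^3 < a^2*b+b^2*a+(3*c+d)^3 := by
  have hc0 : (0:ℝ) ≤ c := by linarith
  nlinarith [pow_le_pow_left₀ (by linarith : (0:ℝ) ≤ 4*c) (by linarith : 4*c ≤ 3*c+d) 3,
    mul_pos (mul_pos (by linarith : (0:ℝ) < a) (by linarith : (0:ℝ) < a)) (by linarith : (0:ℝ) < b),
    mul_pos (mul_pos (by linarith : (0:ℝ) < b) (by linarith : (0:ℝ) < b)) (by linarith : (0:ℝ) < a)]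

lemma step_upper (h1 : 1 ≤ a) (h2 : a < b) :
    a^2*b+b^2*a+(3*c+d)^3 < 2*b^3+(3*c+d)^3 := by
  nlinarith [mul_pos (by linarith : (0:ℝ) < b) (by linarith : (0:ℝ) < b-a),
    mul_pos (by linarith : (0:ℝ) < a) (by linarith : (0:ℝ) < b-a),
    mul_pos (mul_pos (by linarith : (0:ℝ) < b) (by linarith : (0:ℝ) < b)) (by linarith : (0:ℝ) < b-a)]

lemma step_gamma (h1 : 1 ≤ a) (h2 : a < b) (h3 : c ≤ d) (h4 : b ≤ 2*c) (h5 : d ≤ 2*c) :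
    ((a+b)^2*(b+3*c+d))*c ≤ b*(a^2*b+b^2*a+(3*c+d)^3) := by
  have hc : (0:ℝ) < c := by linarith
  have hb : (0:ℝ) < b := by linarith
  have h64 : (4*c)^3 ≤ (3*c+d)^3 := pow_le_pow_left₀ (by linarith) (by linarith) 3
  have h1' : (a+b)^2*(b+3*c+d)*c ≤ ((2*b)^2*(7*c))*c := by
    apply mul_le_mul_of_nonneg_right _ (le_of_lt hc)
    apply mul_le_mul (pow_le_pow_left₀ (by linarith) (by linarith) 2) (by linarith) (by linarith) (by positivity)
  have h2' : ((2*b)^2*(7*c))*c ≤ b*(3*c+d)^3 := by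
    have hx : 28*(b*b)*(c*c) ≤ 56*b*(c*c*c) := by nlinarith [mul_pos hb (mul_pos hc hc)]
    nlinarith [mul_le_mul_of_nonneg_left h64 hb.le]
  nlinarith [mul_nonneg (mul_nonneg (sq_nonneg a) hb.le) hb.le,
    mul_nonneg (mul_nonneg (sq_nonneg b) (by linarith : (0:ℝ) ≤ a)) hb.le]

lemma step_beta (h1 : 1 ≤ a) (h2 : a < b) (h3 : c ≤ d) (h4 : b ≤ 2*c) (h5 : d ≤ 2*c)
    (hQ : (a+b)*(b-a)^2*c ≤ (d-c)*(3*c+d)^3) :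
    (a^3+b^3+(3*c+d)^3)*c ≤ d*(a^2*b+b^2*a+(3*c+d)^3) := by
  have hTC : (3*c+d)^3 ≤ a^2*b+b^2*a+(3*c+d)^3 := by
    nlinarith [mul_nonneg (mul_nonneg (by linarith : (0:ℝ) ≤ a) (by linarith : (0:ℝ) ≤ a)) (by linarith : (0:ℝ) ≤ b),
      mul_nonneg (mul_nonneg (by linarith : (0:ℝ) ≤ b) (by linarith : (0:ℝ) ≤ b)) (by linarith : (0:ℝ) ≤ a)]
  have key : (a+b)*(b-a)^2*c ≤ (d-c)*(a^2*b+b^2*a+(3*c+d)^3) :=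
    le_trans hQ (mul_le_mul_of_nonneg_left hTC (by linarith))
  nlinarith [key]

lemma step_Q (h1 : 1 ≤ a) (h2 : a < b) (h3 : c ≤ d) (h4 : b ≤ 2*c) (h5 : d ≤ 2*c) :
    (((a+b)^2*(a+3*c+d)) + ((a+b)^2*(b+3*c+d))) * (((a+b)^2*(b+3*c+d)) - ((a+b)^2*(a+3*c+d)))^2
      * (a^2*b+b^2*a+(3*c+d)^3)
    ≤ ((a^3+b^3+(3*c+d)^3) - (a^2*b+b^2*a+(3*c+d)^3)) * (3*(a^2*b+b^2*a+(3*c+d)^3)+(a^3+b^3+(3*c+d)^3))^3 := by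
  have hc : (0:ℝ) < c := by linarith
  set T : ℝ := 3*c+d with hT
  set C : ℝ := a^2*b+b^2*a+T^3 with hC
  set D : ℝ := a^3+b^3+T^3 with hD
  have hTpos : 0 < T := by simp only [hT]; linarith
  have h2b : 2*b ≤ T := by simp only [hT]; linarith
  have hab : a + b ≤ T := by linarith
  have habpos : (0:ℝ) < a + b := by linarith
  have h8b : (2*b)^3 ≤ T^3 := pow_le_pow_left₀ (by linarith) h2b 3
  have hCup : C ≤ 2*T^3 := by
    have ha2b : a^2*b ≤ b^3 := by
      nlinarith [mul_nonneg (by linarith : (0:ℝ) ≤ b) (by linarith : (0:ℝ) ≤ b-a),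
        mul_nonneg (by linarith : (0:ℝ) ≤ a) (by linarith : (0:ℝ) ≤ b-a)]
    have hab2 : b^2*a ≤ b^3 := by nlinarith [mul_nonneg (sq_nonneg b) (by linarith : (0:ℝ) ≤ b-a)]
    simp only [hC]; nlinarith [h8b]
  have hTC : T^3 ≤ C := by
    simp only [hC]
    nlinarith [mul_nonneg (sq_nonneg a) (by linarith : (0:ℝ) ≤ b), mul_nonneg (sq_nonneg b) (by linarith : (0:ℝ) ≤ a)]
  have hTD : T^3 ≤ D := by
    simp only [hD]; nlinarith [pow_pos (by linarith : (0:ℝ) < a) 3, pow_pos (by linarith : (0:ℝ) < b) 3]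
  have key : (a+b)^5 * ((a+b)+2*T) * C ≤ 6*T^9 := by
    have k1 : (a+b)^5 ≤ T^5 := pow_le_pow_left₀ habpos.le hab 5
    have k2 : (a+b)+2*T ≤ 3*T := by linarith
    have hC0 : (0:ℝ) ≤ C := le_trans (by positivity) hTC
    have := mul_le_mul (mul_le_mul k1 k2 (by linarith) (by positivity)) hCup hC0 (by positivity)
    calc (a+b)^5 * ((a+b)+2*T) * C ≤ T^5*(3*T)*(2*T^3) := this
    _ = 6*T^9 := by ring
  have hcube : (4*T^3)^3 ≤ (3*C+D)^3 := pow_le_pow_left₀ (by positivity) (by linarith) 3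
  have key2 : (a+b)^5 * ((a+b)+2*T) * C ≤ (3*C+D)^3 := by
    have h9 : (0:ℝ) ≤ T^9 := by positivity
    nlinarith [key, hcube]
  have hK : (0:ℝ) ≤ (a+b)*(b-a)^2 := by positivity
  have final := mul_le_mul_of_nonneg_left key2 hK
  have e1 : (((a+b)^2*(a+3*c+d)) + ((a+b)^2*(b+3*c+d))) * (((a+b)^2*(b+3*c+d)) - ((a+b)^2*(a+3*c+d)))^2 * C
      = ((a+b)*(b-a)^2) * ((a+b)^5 * ((a+b)+2*T) * C) := by simp only [hT]; ring
  have e2 : (D - C) * (3*C+D)^3 = ((a+b)*(b-a)^2) * (3*C+D)^3 := by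
    simp only [hC, hD]; ring
  rw [e1, e2]; exact final

end StepLemmas

/-! ### Invariants -/

lemma ice_one : pa 1 = 1 ∧ pb 1 = 2 ∧ pc 1 = 1 ∧ pd 1 = 2 := by decide

lemma inv (n : ℕ) (hn : 1 ≤ n) :
    1 ≤ (pa n:ℝ) ∧ (pa n:ℝ) < pb n ∧ (pc n:ℝ) ≤ pd n ∧ (pb n:ℝ) ≤ 2*pc n ∧ (pd n:ℝ) ≤ 2*pc n := by
  induction n with
  | zero => omega
  | succ k ih =>
    rcases Nat.eq_zero_or_pos k with hk | hk
    · subst hk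
      obtain ⟨e1, e2, e3, e4⟩ := ice_one
      rw [e1, e2, e3, e4]; norm_num
    · obtain ⟨i1, i2, i3, i4, i5⟩ := ih hk
      rw [paR_succ, pbR_succ, pcR_succ, pdR_succ]
      exact ⟨step_a1 i1 i2 i3 i4, step_ab i1 i2 i3 i4, step_cd i1 i2,
        step_b2c i1 i2 i3 i4 i5, step_d2c i1 i2 i3 i4 i5⟩

lemma invQ (n : ℕ) (hn : 1 ≤ n) :
    ((pa n:ℝ)+pb n)*((pb n:ℝ)-pa n)^2*pc n ≤ ((pd n:ℝ)-pc n)*(3*(pc n:ℝ)+pd n)^3 := by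
  induction n with
  | zero => omega
  | succ k ih =>
    rcases Nat.eq_zero_or_pos k with hk | hk
    · subst hk
      obtain ⟨e1, e2, e3, e4⟩ := ice_one
      rw [e1, e2, e3, e4]; norm_num
    · obtain ⟨i1, i2, i3, i4, i5⟩ := inv k hk
      rw [paR_succ, pbR_succ, pcR_succ, pdR_succ]
      exact step_Q i1 i2 i3 i4 i5

lemma pcR_pos (n : ℕ) (hn : 1 ≤ n) : (0:ℝ) < pc n := by
  obtain ⟨i1, i2, i3, i4, i5⟩ := inv n hn
  linarith

lemma gamma_step (n : ℕ) (hn : 1 ≤ n) : gammaSeq (n+1) ≤ gammaSeq n := by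
  obtain ⟨i1, i2, i3, i4, i5⟩ := inv n hn
  have hc := pcR_pos n hn
  have hc' := pcR_pos (n+1) (by omega)
  rw [gammaSeq, gammaSeq, div_le_div_iff₀ hc' hc]
  rw [pbR_succ, pcR_succ]
  exact step_gamma i1 i2 i3 i4 i5

lemma beta_step (n : ℕ) (hn : 1 ≤ n) : betaSeq (n+1) ≤ betaSeq n := by
  obtain ⟨i1, i2, i3, i4, i5⟩ := inv n hn
  have hc := pcR_pos n hn
  have hc' := pcR_pos (n+1) (by omega)
  rw [betaSeq, betaSeq, div_le_div_iff₀ hc' hc]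
  rw [pdR_succ, pcR_succ]
  exact step_beta i1 i2 i3 i4 i5 (invQ n hn)

lemma gamma_mono (m n : ℕ) (hm : 1 ≤ m) (hmn : m ≤ n) : gammaSeq n ≤ gammaSeq m := by
  induction n with
  | zero => omega
  | succ k ih =>
    rcases Nat.lt_or_ge m (k+1) with h | h
    · exact le_trans (gamma_step k (by omega)) (ih (by omega))
    · have : m = k+1 := by omega
      subst this; rfl

lemma beta_mono (m n : ℕ) (hm : 1 ≤ m) (hmn : m ≤ n) : betaSeq n ≤ betaSeq m := by
  induction n with
  | zero => omega
  | succ k ih =>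
    rcases Nat.lt_or_ge m (k+1) with h | h
    · exact le_trans (beta_step k (by omega)) (ih (by omega))
    · have : m = k+1 := by omega
      subst this; rfl

lemma gamma_nonneg (n : ℕ) : 0 ≤ gammaSeq n := by
  rw [gammaSeq]; positivity

lemma beta_nonneg (n : ℕ) : 0 ≤ betaSeq n := by
  rw [betaSeq]; positivity

/-! ### Per-step bounds for `pc` -/

lemma pc_lower (n : ℕ) (hn : 1 ≤ n) : 64*(pc n:ℝ)^3 < pc (n+1) := by
  obtain ⟨i1, i2, i3, i4, i5⟩ := inv n hn
  rw [pcR_succ]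
  exact step_lower i1 i2 i3 i4

/-- Per-step upper bound, with the constant taken at any earlier index `m`. -/
lemma pc_upper (m n : ℕ) (hm : 1 ≤ m) (hmn : m ≤ n) :
    (pc (n+1):ℝ) < (pc n:ℝ)^3 * (2*gammaSeq m^3 + (3 + betaSeq m)^3) := by
  obtain ⟨i1, i2, i3, i4, i5⟩ := inv n (le_trans hm hmn)
  have hc := pcR_pos n (le_trans hm hmn)
  have hb : (pb n : ℝ) = gammaSeq n * pc n := by
    rw [gammaSeq, div_mul_cancel₀ _ (ne_of_gt hc)]
  have hd : (pd n : ℝ) = betaSeq n * pc n := by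
    rw [betaSeq, div_mul_cancel₀ _ (ne_of_gt hc)]
  have h1 : (pc (n+1):ℝ) < 2*(pb n:ℝ)^3 + (3*(pc n:ℝ)+pd n)^3 := by
    rw [pcR_succ]; exact step_upper i1 i2
  have h2 : 2*(pb n:ℝ)^3 + (3*(pc n:ℝ)+pd n)^3
      = (pc n:ℝ)^3 * (2*gammaSeq n^3 + (3 + betaSeq n)^3) := by
    rw [hb, hd]; ring
  have hg : gammaSeq n ^ 3 ≤ gammaSeq m ^ 3 :=
    pow_le_pow_left₀ (gamma_nonneg n) (gamma_mono m n hm hmn) 3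
  have hbt : (3 + betaSeq n) ^ 3 ≤ (3 + betaSeq m) ^ 3 :=
    pow_le_pow_left₀ (by linarith [beta_nonneg n]) (by linarith [beta_mono m n hm hmn]) 3
  have h3 : (pc n:ℝ)^3 * (2*gammaSeq n^3 + (3 + betaSeq n)^3)
      ≤ (pc n:ℝ)^3 * (2*gammaSeq m^3 + (3 + betaSeq m)^3) := by
    apply mul_le_mul_of_nonneg_left (by linarith) (by positivity)
  linarith [h1, h2.le, h3, h2 ▸ h1]

/-! ### Main theorem -/

theorem stmt_9 (m n : ℕ) (hm : 1 ≤ m) (hmn : m < n) :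
    (64 : ℝ) ^ ((3 ^ (n - m) - 1) / 2) * (pc m : ℝ) ^ (3 ^ (n - m)) < (pc n : ℝ) ∧
    (pc n : ℝ) <
      (64 : ℝ) ^ ((3 ^ (n - m) - 1) / 2) * (pc m : ℝ) ^ (3 ^ (n - m)) *
        (gammaSeq m ^ 3 / 32 + (1 + (betaSeq m - 1) / 4) ^ 3) ^ ((3 ^ (n - m) - 1) / 2) := by
  have hc := pcR_pos m hm
  set F : ℝ := gammaSeq m ^ 3 / 32 + (1 + (betaSeq m - 1) / 4) ^ 3 with hF
  have hFval : 64 * F = 2*gammaSeq m^3 + (3 + betaSeq m)^3 := by rw [hF]; ring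
  have hFpos : 0 < F := by
    have h1 : (0:ℝ) < (1 + (betaSeq m - 1) / 4)^3 := by
      have := beta_nonneg m
      have : (0:ℝ) < 1 + (betaSeq m - 1)/4 := by linarith
      positivity
    have := gamma_nonneg m
    have h2 : (0:ℝ) ≤ gammaSeq m ^3 / 32 := by positivity
    linarith
  -- main induction on k with n = m + k
  have main : ∀ k : ℕ, 1 ≤ k →
      (64 : ℝ) ^ ((3 ^ k - 1) / 2) * (pc m : ℝ) ^ (3 ^ k) < (pc (m+k) : ℝ) ∧
      (pc (m+k) : ℝ) < (64 : ℝ) ^ ((3 ^ k - 1) / 2) * (pc m : ℝ) ^ (3 ^ k) * F ^ ((3 ^ k - 1) / 2) := by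
    intro k hk
    induction k with
    | zero => omega
    | succ j ih =>
      rcases Nat.eq_zero_or_pos j with hj | hj
      · subst hj
        have hE : ((3:ℕ)^(0+1) - 1)/2 = 1 := by norm_num
        have he : (3:ℕ)^(0+1) = 3 := by norm_num
        have hmm : m + (0+1) = m + 1 := by norm_num
        rw [hE, he, hmm, pow_one, pow_one]
        constructor
        · exact pc_lower m hm
        · have h1 := pc_upper m m hm le_rfl
          have h2 : (pc m:ℝ)^3 * (2*gammaSeq m^3 + (3 + betaSeq m)^3) = 64*(pc m:ℝ)^3*F := by
            rw [← hFval]; ring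
          rw [h2] at h1
          exact h1
      · obtain ⟨IH1, IH2⟩ := ih hj
        obtain ⟨i, hi⟩ : Odd ((3:ℕ)^j) := Odd.pow (by decide)
        have hE : (3^j - 1)/2 = i := by omega
        have hE' : (3^(j+1) - 1)/2 = 3*i + 1 := by
          have : (3:ℕ)^(j+1) = 3^j * 3 := pow_succ 3 j
          omega
        have he' : (3:ℕ)^(j+1) = 3^j * 3 := pow_succ 3 j
        rw [hE] at IH1 IH2
        rw [hE', he']
        set X : ℝ := (64:ℝ)^i * (pc m:ℝ)^(3^j) with hX
        have hXpos : 0 < X := by rw [hX]; positivity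
        have hcn := pcR_pos (m+j) (by omega)
        have hlow := pc_lower (m+j) (by omega)
        have hup := pc_upper m (m+j) hm (by omega)
        have hcube1 : X^3 < (pc (m+j):ℝ)^3 := by
          apply pow_lt_pow_left₀ IH1 hXpos.le
          norm_num
        have hmj : m + (j+1) = (m+j) + 1 := by omega
        rw [hmj]
        constructor
        · -- lower bound
          have h1 : (64:ℝ)^(3*i+1) * (pc m:ℝ)^(3^j*3) = 64 * X^3 := by
            rw [hX]; ring
          rw [h1]
          calc (64:ℝ) * X^3 < 64 * (pc (m+j):ℝ)^3 := by linarith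
            _ < (pc ((m+j)+1) : ℝ) := hlow
        · -- upper bound
          have hcube2 : (pc (m+j):ℝ)^3 < (X * F^i)^3 := by
            apply pow_lt_pow_left₀ (by rw [hX]; exact IH2) hcn.le
            norm_num
          have h64F : (0:ℝ) < 64 * F := by linarith
          have h2 : (pc ((m+j)+1):ℝ) < (pc (m+j):ℝ)^3 * (64*F) := by
            rw [hFval]; exact hup
          have h3 : (pc (m+j):ℝ)^3 * (64*F) < (X*F^i)^3 * (64*F) :=
            mul_lt_mul_of_pos_right hcube2 h64F
          have h4 : (X*F^i)^3 * (64*F) = (64:ℝ)^(3*i+1) * (pc m:ℝ)^(3^j*3) * F^(3*i+1) := by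
            rw [hX]; ring
          linarith [h4 ▸ h3]
  have hk1 : 1 ≤ n - m := by omega
  have := main (n - m) hk1
  rwa [show m + (n - m) = n by omega] at this
end

section
/- For every n ≥ 1, 8·pc(n)·(1 + (3/2)·α(n)·γ(n)) < I(n) < 8·pc(n)·(β(n) + (3/2)·γ(n)) (inequalities of real numbers). -/
/-- The number of ice-model configurations on `SG(n)`. -/
def iceI (n : ℕ) : ℕ := 6 * pa n + 6 * pb n + 6 * pc n + 2 * pd n

/-- The number of vertices of `SG(n)` (the division is exact). -/
def vSG (n : ℕ) : ℕ := 3 * (3 ^ n + 1) / 2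

/-!
Both bounds simplify: `8·pc·(1 + (3/2)·α·γ) = 8·pc + 12·pa` and
`8·pc·(β + (3/2)·γ) = 8·pd + 12·pb`, so with `I = 6·pa + 6·pb + 6·pc + 2·pd` the two
inequalities become `6·pa + 2·pc < 6·pb + 2·pd` and `6·pa + 6·pc < 6·pb + 6·pd`. Both follow
from `pa < pb`, which the recursion preserves since the common factor `(a + b)²` is positive,
and `pc ≤ pd`, which every step produces since `a²b + b²a ≤ a³ + b³`. Positivity of `pc(n)` for
`n ≥ 1` keeps the divisions in `α`, `β`, `γ` from taking their junk value.
-/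

lemma sq_mul_add_sq_mul_le_cube_add_cube {R : Type*} [CommRing R] [LinearOrder R]
    [IsStrictOrderedRing R] {a b : R} (ha : 0 ≤ a) (hb : 0 ≤ b) :
    a ^ 2 * b + b ^ 2 * a ≤ a ^ 3 + b ^ 3 := by
  nlinarith [mul_nonneg (add_nonneg ha hb) (sq_nonneg (a - b))]

lemma pc_le_pd (n : ℕ) : pc n ≤ pd n := by
  cases n with
  | zero => decide
  | succ k =>
    rw [pc_succ, pd_succ]
    have key : pa k ^ 2 * pb k + pb k ^ 2 * pa k ≤ pa k ^ 3 + pb k ^ 3 := by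
      exact_mod_cast sq_mul_add_sq_mul_le_cube_add_cube (R := ℤ)
        (Int.natCast_nonneg (pa k)) (Int.natCast_nonneg (pb k))
    omega

theorem stmt_11 (n : ℕ) (hn : 1 ≤ n) :
    8 * (pc n : ℝ) * (1 + 3 / 2 * alphaSeq n * gammaSeq n) < (iceI n : ℝ) ∧
    (iceI n : ℝ) < 8 * (pc n : ℝ) * (betaSeq n + 3 / 2 * gammaSeq n) := by
  have hab : (pa n : ℝ) < pb n := by exact_mod_cast pa_lt_pb n
  have hcd : (pc n : ℝ) ≤ pd n := by exact_mod_cast pc_le_pd n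
  have hb : (pb n : ℝ) ≠ 0 := by exact_mod_cast ((Nat.zero_le _).trans_lt (pa_lt_pb n)).ne'
  have hc : (pc n : ℝ) ≠ 0 := by exact_mod_cast (pc_pos hn).ne'
  have hlower : 8 * (pc n : ℝ) * (1 + 3 / 2 * alphaSeq n * gammaSeq n) = 8 * pc n + 12 * pa n := by
    unfold alphaSeq gammaSeq
    field_simp
    ring
  have hupper : 8 * (pc n : ℝ) * (betaSeq n + 3 / 2 * gammaSeq n) = 8 * pd n + 12 * pb n := by
    unfold betaSeq gammaSeq
    field_simp
    ring
  rw [hlower, hupper, iceI]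
  push_cast
  constructor <;> linarith
end

section
/- The entropy per site of the ice model on the two-dimensional Sierpinski gasket, i.e. the limit S of ln I(n)/v(n) as n → ∞, exists and satisfies 0.51564 < S < 0.51565. -/
/-!
Writing `s = pa + pb` and `q = 3 pc + pd`, the recursion closes on the pair:
`s' = s² (s + 2q)`, `q' = s³ + 4q³`, and `I = 6s + 2q` lies between `2q` and `8q`.
Hence `2q' = (2q)³ (1 + (s/q)³/4)`, while `s/q` decreases. So `log (2q_n) / 3^n` increases,
and from step `N` on it gains at most `(s_N/q_N)³ / (8 · 3^N)` in total. Since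
`v(n) ~ (3/2) 3^n`, the entropy is `2/3` of its limit; `N = 3` already pins it down to the
required precision.
-/

open Filter Topology Real

theorem exists_tendsto_div_pow_of_mul_le_of_le_mul_add {a : ℕ → ℝ} {b δ : ℝ} {N : ℕ}
    (hb : 1 < b) (hlow : ∀ n ≥ N, b * a n ≤ a (n + 1))
    (hup : ∀ n ≥ N, a (n + 1) ≤ b * a n + δ) :
    ∃ L, Tendsto (fun n => a n / b ^ n) atTop (𝓝 L) ∧
      a N / b ^ N ≤ L ∧ L ≤ a N / b ^ N + δ / ((b - 1) * b ^ N) := by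
  have hb0 : 0 < b := one_pos.trans hb
  have hb1 : 0 < b - 1 := sub_pos.2 hb
  have hδ : 0 ≤ δ := by linarith [hlow N le_rfl, hup N le_rfl]
  set c : ℕ → ℝ := fun n => a n / b ^ n
  set e : ℕ → ℝ := fun n => c n + δ / ((b - 1) * b ^ n)
  have hc_le_e (n : ℕ) : c n ≤ e n := le_add_of_nonneg_right (by positivity)
  have hc_succ (n : ℕ) (hn : n ≥ N) : c n ≤ c (n + 1) := by
    have : c n = b * a n / b ^ (n + 1) := by simp only [c]; field_simp; ring
    rw [this]
    exact div_le_div_of_nonneg_right (hlow n hn) (by positivity)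
  have he_succ (n : ℕ) (hn : n ≥ N) : e (n + 1) ≤ e n := by
    have hstep : c (n + 1) ≤ (b * a n + δ) / b ^ (n + 1) :=
      div_le_div_of_nonneg_right (hup n hn) (by positivity)
    have : e n = (b * a n + δ) / b ^ (n + 1) + δ / ((b - 1) * b ^ (n + 1)) := by
      simp only [e, c]; field_simp; ring
    simp only [e] at this ⊢
    linarith
  have hmono : Monotone fun k => c (k + N) :=
    monotone_nat_of_le_succ fun k => by simpa [add_right_comm] using hc_succ (k + N) (by omega)
  have hanti : Antitone fun k => e (k + N) :=
    antitone_nat_of_succ_le fun k => by simpa [add_right_comm] using he_succ (k + N) (by omega)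
  have hbound (k : ℕ) : c (k + N) ≤ e N := by
    simpa using (hc_le_e (k + N)).trans (hanti (Nat.zero_le k))
  have hbdd : BddAbove (Set.range fun k => c (k + N)) :=
    ⟨e N, by rintro _ ⟨k, rfl⟩; exact hbound k⟩
  refine ⟨⨆ k, c (k + N), ?_, ?_, ciSup_le hbound⟩
  · exact (tendsto_add_atTop_iff_nat N).1 (tendsto_atTop_ciSup hmono hbdd)
  · simpa using le_ciSup hbdd 0

theorem mul_log_le_mul_log_of_pow_le_pow {x y m p : ℕ} (hx : 0 < x) (h : x ^ m ≤ y ^ p) :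
    m * log x ≤ p * log y := by
  rw [← Real.log_pow, ← Real.log_pow]
  exact Real.log_le_log (by positivity) (by exact_mod_cast h)

def iceS (n : ℕ) : ℕ := pa n + pb n

def iceQ (n : ℕ) : ℕ := 3 * pc n + pd n

theorem iceS_succ (n : ℕ) : iceS (n + 1) = iceS n ^ 2 * (iceS n + 2 * iceQ n) := by
  rcases h : iceSeq n with ⟨a, b, c, d⟩
  simp only [iceS, iceQ, pa, pb, pc, pd, iceSeq, h, iceStep]
  ring

theorem iceQ_succ (n : ℕ) : iceQ (n + 1) = iceS n ^ 3 + 4 * iceQ n ^ 3 := by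
  rcases h : iceSeq n with ⟨a, b, c, d⟩
  simp only [iceS, iceQ, pa, pb, pc, pd, iceSeq, h, iceStep]
  ring

theorem iceI_eq (n : ℕ) : iceI n = 6 * iceS n + 2 * iceQ n := by
  simp only [iceI, iceS, iceQ]
  ring

theorem iceS_three : iceS 3 = 16029819 := rfl

theorem iceQ_three : iceQ 3 = 587054345 := rfl

theorem iceQ_pos (n : ℕ) : 0 < iceQ n := by
  induction n with
  | zero => exact Nat.one_pos
  | succ n ih => rw [iceQ_succ]; positivity

theorem iceS_le_iceQ (n : ℕ) : iceS n ≤ iceQ n := by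
  induction n with
  | zero => exact le_rfl
  | succ n ih =>
    rw [iceS_succ, iceQ_succ]
    have : iceS n ^ 2 ≤ iceQ n ^ 2 := Nat.pow_le_pow_left ih 2
    nlinarith

theorem iceS_succ_mul_iceQ_le (n : ℕ) : iceS (n + 1) * iceQ n ≤ iceS n * iceQ (n + 1) := by
  have hsq := iceS_le_iceQ n
  have hs' : iceS (n + 1) ≤ 3 * iceS n * iceQ n ^ 2 := by
    rw [iceS_succ]
    have := Nat.mul_le_mul_left (iceS n) (Nat.pow_le_pow_left hsq 2)
    have := Nat.mul_le_mul_left (iceS n * iceQ n) hsq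
    nlinarith
  have hq' : 3 * iceQ n ^ 3 ≤ iceQ (n + 1) := by rw [iceQ_succ]; omega
  calc iceS (n + 1) * iceQ n ≤ 3 * iceS n * iceQ n ^ 2 * iceQ n := Nat.mul_le_mul_right _ hs'
    _ = iceS n * (3 * iceQ n ^ 3) := by ring
    _ ≤ iceS n * iceQ (n + 1) := Nat.mul_le_mul_left _ hq'

theorem iceRatio_antitone : Antitone fun n => (iceS n : ℝ) / iceQ n := by
  refine antitone_nat_of_succ_le fun n => ?_
  have hq := iceQ_pos n
  have hq' := iceQ_pos (n + 1)
  rw [div_le_div_iff₀ (by positivity) (by positivity)]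
  exact_mod_cast iceS_succ_mul_iceQ_le n

theorem iceRatio_le_of_three_le {n : ℕ} (hn : 3 ≤ n) : (iceS n : ℝ) / iceQ n ≤ 1 / 36 :=
  (iceRatio_antitone hn).trans (by norm_num [iceS_three, iceQ_three])

theorem three_mul_log_le_log_iceQ_succ (n : ℕ) :
    3 * log (2 * iceQ n) ≤ log (2 * iceQ (n + 1)) := by
  have hq := iceQ_pos n
  rw [show (3 : ℝ) = (3 : ℕ) by norm_num, ← Real.log_pow]
  refine Real.log_le_log (by positivity) ?_
  have : (2 * iceQ n) ^ 3 ≤ 2 * iceQ (n + 1) := by rw [iceQ_succ, mul_pow]; omega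
  exact_mod_cast this

theorem log_iceQ_succ_le (n : ℕ) :
    log (2 * iceQ (n + 1)) ≤ 3 * log (2 * iceQ n) + ((iceS n : ℝ) / iceQ n) ^ 3 / 4 := by
  have hq : (0 : ℝ) < iceQ n := by exact_mod_cast iceQ_pos n
  set r : ℝ := (iceS n : ℝ) / iceQ n
  have hr : 0 ≤ r := by positivity
  have hsplit : (2 * iceQ (n + 1) : ℝ) = (2 * iceQ n) ^ 3 * (1 + r ^ 3 / 4) := by
    rw [iceQ_succ]; push_cast; simp only [r]; field_simp; ring
  have hlog1 : log (1 + r ^ 3 / 4) ≤ r ^ 3 / 4 := by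
    linarith [Real.log_le_sub_one_of_pos (x := 1 + r ^ 3 / 4) (by positivity)]
  rw [hsplit, Real.log_mul (by positivity) (by positivity), Real.log_pow]
  push_cast
  linarith

theorem vSG_cast (n : ℕ) : (vSG n : ℝ) = 3 * (3 ^ n + 1) / 2 := by
  have hdvd : 2 ∣ 3 * (3 ^ n + 1) :=
    Dvd.dvd.mul_left (Odd.add_one (Odd.pow (by decide))).two_dvd _
  rw [vSG, Nat.cast_div hdvd (by norm_num)]
  push_cast
  ring

theorem log_iceI_mem_Icc (n : ℕ) :
    log (iceI n) ∈ Set.Icc (log (2 * iceQ n)) (log (2 * iceQ n) + log 4) := by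
  have hq : (0 : ℝ) < iceQ n := by exact_mod_cast iceQ_pos n
  have hS : (iceS n : ℝ) ≤ iceQ n := by exact_mod_cast iceS_le_iceQ n
  have hI : (iceI n : ℝ) = 6 * iceS n + 2 * iceQ n := by rw [iceI_eq]; push_cast; ring
  constructor
  · exact Real.log_le_log (by positivity) (by rw [hI]; linarith [(iceS n).cast_nonneg (α := ℝ)])
  · rw [← Real.log_mul (by positivity) (by norm_num)]
    exact Real.log_le_log (by rw [hI]; positivity) (by rw [hI]; linarith)

theorem tendsto_log_iceI_div_vSG {L : ℝ}
    (hL : Tendsto (fun n => log (2 * iceQ n) / 3 ^ n) atTop (𝓝 L)) :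
    Tendsto (fun n => log (iceI n) / vSG n) atTop (𝓝 (2 / 3 * L)) := by
  have hpow : Tendsto (fun n : ℕ => ((3 : ℝ) ^ n)⁻¹) atTop (𝓝 0) := by
    simpa using
      tendsto_pow_atTop_nhds_zero_of_lt_one (r := (1 / 3 : ℝ)) (by norm_num) (by norm_num)
  have hnum : Tendsto (fun n => log (iceI n) / 3 ^ n) atTop (𝓝 L) := by
    have hupper := (hL.add (hpow.const_mul (log 4))).congr
      (f₂ := fun n => (log (2 * iceQ n) + log 4) / 3 ^ n) fun n => by ring
    rw [mul_zero, add_zero] at hupper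
    refine tendsto_of_tendsto_of_tendsto_of_le_of_le hL hupper (fun n => ?_) (fun n => ?_)
    · exact div_le_div_of_nonneg_right (log_iceI_mem_Icc n).1 (by positivity)
    · exact div_le_div_of_nonneg_right (log_iceI_mem_Icc n).2 (by positivity)
  have hden : Tendsto (fun n => (vSG n : ℝ) / 3 ^ n) atTop (𝓝 (3 / 2)) := by
    have : (fun n => (vSG n : ℝ) / 3 ^ n) = fun n => 3 / 2 * (1 + ((3 : ℝ) ^ n)⁻¹) := by
      funext n; rw [vSG_cast]; field_simp
    rw [this]
    simpa using (hpow.const_add 1).const_mul (3 / 2 : ℝ)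
  rw [show 2 / 3 * L = L / (3 / 2) by ring]
  exact (hnum.div hden (by norm_num)).congr fun n =>
    div_div_div_cancel_right₀ (by positivity) _ _

-- `2109/70 < log₂ 1174108690 < 8647/287` are rational approximations from both sides.
theorem log_two_mul_iceQ_three_mem_Icc :
    log (2 * iceQ 3) ∈ Set.Icc (2109 / 70 * log 2) (8647 / 287 * log 2) := by
  have h2 : (2 * iceQ 3 : ℝ) = (1174108690 : ℕ) := by rw [iceQ_three]; norm_num
  have hlower := mul_log_le_mul_log_of_pow_le_pow (x := 2) (y := 1174108690)
    (m := 2109) (p := 70) (by norm_num) (by decide +kernel)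
  have hupper := mul_log_le_mul_log_of_pow_le_pow (x := 1174108690) (y := 2)
    (m := 287) (p := 8647) (by norm_num) (by decide +kernel)
  rw [h2]
  push_cast at hlower hupper ⊢
  constructor <;> linarith

theorem stmt_15 :
    ∃ S : ℝ, Filter.Tendsto (fun n => Real.log (iceI n) / (vSG n : ℝ))
        Filter.atTop (nhds S) ∧ 0.51564 < S ∧ S < 0.51565 := by
  obtain ⟨L, hL, hL_lower, hL_upper⟩ := exists_tendsto_div_pow_of_mul_le_of_le_mul_add
    (a := fun n => log (2 * iceQ n)) (b := 3) (δ := (1 / 36) ^ 3 / 4) (N := 3) (by norm_num)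
    (fun n _ => three_mul_log_le_log_iceQ_succ n)
    (fun n hn => (log_iceQ_succ_le n).trans <| by
      gcongr _ + ?_ ^ 3 / 4
      exact iceRatio_le_of_three_le hn)
  refine ⟨2 / 3 * L, tendsto_log_iceI_div_vSG hL, ?_, ?_⟩
  all_goals
    obtain ⟨h_lower, h_upper⟩ := log_two_mul_iceQ_three_mem_Icc
    norm_num at hL_lower hL_upper
    linarith [log_two_gt_d9, log_two_lt_d9]
end
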